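/- arXiv:1907.00192 — 2 statements merged into one kernel-verified Lean document; each statement's English description precedes it below -/
import Mathlib

section
/- A d-dimensional infinite word w is SURD if and only if it is SURDO, i.e., if and only if every translate w^{(p)} : i ↦ w(i + p) (p ∈ ℕ^d) is SURD. -/
/-- A unidimensional infinite word is uniformly recurrent if for every length `n`
there is a bound `b` such that every length-`b` factor contains every length-`n` factor. -/
def UniformlyRecurrent {A : Type*} (w : ℕ → A) : Prop :=
  ∀ n : ℕ, ∃ b : ℕ, ∀ p m : ℕ, ∃ k : ℕ,
    m ≤ k ∧ k + n ≤ m + b ∧ ∀ j < n, w (k + j) = w (p + j)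

/-- The word along direction `q` with respect to size `s` in the `d`-dimensional word `w`:
its `ℓ`-th letter is the block of size `s` at position `ℓ • q`. -/
def dirWord {d : ℕ} {A : Type*} (w : (Fin d → ℕ) → A) (q s : Fin d → ℕ) :
    ℕ → ({i : Fin d → ℕ // ∀ j, i j < s j} → A) :=
  fun ℓ i => w (fun j => i.1 j + ℓ * q j)

/-- Uniformly recurrent along all directions. -/
def IsURD {d : ℕ} {A : Type*} (w : (Fin d → ℕ) → A) : Prop :=
  ∀ s q : Fin d → ℕ, Finset.univ.gcd q = 1 →
    ∃ b : ℕ, ∀ m : ℕ, ∃ k : ℕ, m ≤ k ∧ k < m + b ∧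
      dirWord w q s k = dirWord w q s 0

/-- Strongly uniformly recurrent along all directions: the bound depends only on the size. -/
def IsSURD {d : ℕ} {A : Type*} (w : (Fin d → ℕ) → A) : Prop :=
  ∀ s : Fin d → ℕ, ∃ b : ℕ, ∀ q : Fin d → ℕ, Finset.univ.gcd q = 1 →
    ∀ m : ℕ, ∃ k : ℕ, m ≤ k ∧ k < m + b ∧
      dirWord w q s k = dirWord w q s 0

/-- Super strongly uniformly recurrent along all directions from any origin. -/
def IsSSURDO {d : ℕ} {A : Type*} (w : (Fin d → ℕ) → A) : Prop :=
  ∀ s : Fin d → ℕ, ∃ b : ℕ, ∀ q : Fin d → ℕ, Finset.univ.gcd q = 1 →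
    ∀ p : Fin d → ℕ, ∀ m : ℕ, ∃ k : ℕ, m ≤ k ∧ k < m + b ∧
      dirWord (fun i => w (fun j => i j + p j)) q s k =
        dirWord (fun i => w (fun j => i j + p j)) q s 0

/-- Uniform recurrence for `d`-dimensional words: every prefix of size `s` occurs
in every factor of size `(b,…,b)`. -/
def IsUR {d : ℕ} {A : Type*} (w : (Fin d → ℕ) → A) : Prop :=
  ∀ s : Fin d → ℕ, ∃ b : ℕ, ∀ p : Fin d → ℕ, ∃ r : Fin d → ℕ,
    (∀ j, p j ≤ r j ∧ r j + s j ≤ p j + b) ∧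
    ∀ i : Fin d → ℕ, (∀ j, i j < s j) → w (fun j => r j + i j) = w i

/- The letter of the translate `w^(p)` along `q` at `ℓ` is a sub-block of the letter of `w` along `q`
at `ℓ` for the enlarged size `s + p`; so any bound for `w` at size `s + p` serves `w^(p)` at size `s`. -/
lemma dirWord_translate_apply {d : ℕ} {A : Type*} (w : (Fin d → ℕ) → A) (p q s : Fin d → ℕ)
    (ℓ : ℕ) (i : {i : Fin d → ℕ // ∀ j, i j < s j}) :
    dirWord (fun i => w (fun j => i j + p j)) q s ℓ i =
      dirWord w q (s + p) ℓ ⟨i.1 + p, fun j => Nat.add_lt_add_right (i.2 j) (p j)⟩ := by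
  simp only [dirWord, Pi.add_apply, add_right_comm]

lemma dirWord_translate_eq_of_eq {d : ℕ} {A : Type*} {w : (Fin d → ℕ) → A} {p q s : Fin d → ℕ}
    {k ℓ : ℕ} (h : dirWord w q (s + p) k = dirWord w q (s + p) ℓ) :
    dirWord (fun i => w (fun j => i j + p j)) q s k =
      dirWord (fun i => w (fun j => i j + p j)) q s ℓ := by
  funext i
  rw [dirWord_translate_apply, dirWord_translate_apply, h]

lemma IsSURD.translate {d : ℕ} {A : Type*} {w : (Fin d → ℕ) → A} (h : IsSURD w)
    (p : Fin d → ℕ) : IsSURD (fun i => w (fun j => i j + p j)) := by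
  intro s
  obtain ⟨b, hb⟩ := h (s + p)
  refine ⟨b, fun q hq m => ?_⟩
  obtain ⟨k, hmk, hkb, hk⟩ := hb q hq m
  exact ⟨k, hmk, hkb, dirWord_translate_eq_of_eq hk⟩

theorem stmt_9_general {d : ℕ} {A : Type*} (w : (Fin d → ℕ) → A) :
    IsSURD w ↔ ∀ p : Fin d → ℕ, IsSURD (fun i => w (fun j => i j + p j)) :=
  ⟨fun h p => h.translate p, fun h => by simpa using h 0⟩

theorem stmt_9 {d : ℕ} {A : Type*} [Finite A] (w : (Fin d → ℕ) → A) :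
    IsSURD w ↔ ∀ p : Fin d → ℕ, IsSURD (fun i => w (fun j => i j + p j)) :=
  stmt_9_general w
end

section
/- Every d-dimensional SSURDO infinite word is uniformly recurrent (UR). -/
/-! Fix an occurrence `r` of the prefix of size `s`. Reading the size-`s` blocks of the line
from `r` in the coordinate direction `e_a`, SSURDO gives a further occurrence `r + k • e_a` with
`k` in any prescribed window of length `b`, and `b` depends only on `s`. Starting from `r = 0`
and treating the coordinates one after another, each is moved into its window of the target box
without disturbing the coordinates already placed. -/

theorem Finset.univ_gcd_pi_single_one {ι : Type*} [Fintype ι] [DecidableEq ι] (a : ι) :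
    Finset.univ.gcd (Pi.single a 1 : ι → ℕ) = 1 :=
  Nat.dvd_one.mp <| by simpa using Finset.gcd_dvd (f := (Pi.single a 1 : ι → ℕ)) (mem_univ a)

section

variable {d : ℕ} {A : Type*}

def PrefixOccursAt (w : (Fin d → ℕ) → A) (s r : Fin d → ℕ) : Prop :=
  ∀ i : Fin d → ℕ, (∀ j, i j < s j) → w (r + i) = w i

theorem IsSSURDO.exists_bound_prefixOccursAt_add_single {w : (Fin d → ℕ) → A}
    (hw : IsSSURDO w) (s : Fin d → ℕ) :
    ∃ b, ∀ r, PrefixOccursAt w s r → ∀ (a : Fin d) (m : ℕ),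
      ∃ k, m ≤ k ∧ k < m + b ∧ PrefixOccursAt w s (r + Pi.single a k) := by
  obtain ⟨b, hb⟩ := hw s
  refine ⟨b, fun r hr a m => ?_⟩
  obtain ⟨k, hmk, hkb, hk⟩ := hb _ (Finset.univ_gcd_pi_single_one a) r m
  refine ⟨k, hmk, hkb, fun i hi => ?_⟩
  have hblock : w (fun j => i j + k * (Pi.single a 1 : Fin d → ℕ) j + r j) =
      w (fun j => i j + r j) := by
    simpa [dirWord] using congrFun hk ⟨i, hi⟩
  calc w (r + Pi.single a k + i)
        = w (fun j => i j + k * (Pi.single a 1 : Fin d → ℕ) j + r j) := by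
        congr 1; ext j; simp only [Pi.add_apply, Pi.single_apply]; split_ifs <;> ring
    _ = w (r + i) := by rw [hblock, add_comm]; rfl
    _ = w i := hr i hi

theorem exists_prefixOccursAt_mem_box {w : (Fin d → ℕ) → A} {s : Fin d → ℕ} {b : ℕ}
    (hb : ∀ r, PrefixOccursAt w s r → ∀ (a : Fin d) (m : ℕ),
      ∃ k, m ≤ k ∧ k < m + b ∧ PrefixOccursAt w s (r + Pi.single a k))
    (p : Fin d → ℕ) (t : Finset (Fin d)) :
    ∃ r, PrefixOccursAt w s r ∧ (∀ j ∈ t, p j ≤ r j ∧ r j < p j + b) ∧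
      ∀ j ∉ t, r j = 0 := by
  induction t using Finset.induction_on with
  | empty => exact ⟨0, fun i _ => by rw [zero_add], by simp, fun _ _ => rfl⟩
  | @insert a t ha ih =>
    obtain ⟨r, hr, hrt, hr0⟩ := ih
    obtain ⟨k, hpk, hkb, hk⟩ := hb r hr a (p a)
    refine ⟨r + Pi.single a k, hk, fun j hj => ?_, fun j hj => ?_⟩
    · rcases Finset.mem_insert.mp hj with rfl | hjt
      · simpa [hr0 j ha] using ⟨hpk, hkb⟩
      · simpa [Pi.single_apply, ne_of_mem_of_not_mem hjt ha] using hrt j hjt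
    · rw [Finset.mem_insert, not_or] at hj
      simp [hj.1, hr0 j hj.2]

end

theorem stmt_11_general {d : ℕ} {A : Type*} (w : (Fin d → ℕ) → A)
    (hw : IsSSURDO w) : IsUR w := by
  intro s
  obtain ⟨b, hb⟩ := hw.exists_bound_prefixOccursAt_add_single s
  refine ⟨b + ∑ j, s j, fun p => ?_⟩
  obtain ⟨r, hr, hbox, -⟩ := exists_prefixOccursAt_mem_box hb p Finset.univ
  refine ⟨r, fun j => ?_, hr⟩
  have hrj := hbox j (Finset.mem_univ j)
  have hsj : s j ≤ ∑ j, s j :=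
    Finset.single_le_sum (fun _ _ => Nat.zero_le _) (Finset.mem_univ j)
  omega

theorem stmt_11 {d : ℕ} {A : Type*} [Finite A] (w : (Fin d → ℕ) → A)
    (hw : IsSSURDO w) : IsUR w :=
  stmt_11_general w hw
end
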